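/- Let g : [0,1] → [0,1] be continuous with a slack Markov partition P such that each partition interval contains finitely many critical points of g, and let Q = P ∪ Crit(g). If A(g,P) is irreducible and aperiodic, then A(g,Q) is irreducible and aperiodic. -/

import Mathlib

open Set

abbrev UI := unitInterval

/-- Critical points: the endpoints together with the points near which `g` is not
strictly monotone. -/
def Crit (g : UI → UI) : Set UI :=
  {0, 1} ∪ {x | ∀ U ∈ nhds x, ¬ StrictMonoOn g U ∧ ¬ StrictAntiOn g U}

/-- Slack Markov partition for `g`. -/
def SlackPartition (g : UI → UI) (P : Set UI) : Prop :=
  P.Countable ∧ IsClosed P ∧ MapsTo g P P ∧ g '' Crit g ⊆ P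

/-- `J` is a partition interval: a connected component of the complement of `P`. -/
def IsPartInt (P : Set UI) (J : Set UI) : Prop :=
  ∃ x ∈ Pᶜ, J = connectedComponentIn Pᶜ x

/-- Infinite path in the transition graph `Γ(g,P)`. -/
def IsPath (g : UI → UI) (P : Set UI) (c : ℕ → Set UI) : Prop :=
  (∀ n, IsPartInt P (c n)) ∧ ∀ n, c (n + 1) ⊆ g '' c n

/-- The transition graph `Γ(g,P)` contains a finite Rome. -/
def FiniteRome (g : UI → UI) (P : Set UI) : Prop :=
  ∃ R : Set (Set UI), R.Finite ∧ ∀ c : ℕ → Set UI, IsPath g P c → ∃ n, c n ∈ R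

/-- There is a path of length `n` from `J` to `K` in `Γ(g,P)`;
equivalently `Aⁿ_{JK} ≥ 1`. -/
def PathFromTo (g : UI → UI) (P : Set UI) (n : ℕ) (J K : Set UI) : Prop :=
  ∃ c : ℕ → Set UI, c 0 = J ∧ c n = K ∧ (∀ i ≤ n, IsPartInt P (c i)) ∧
    ∀ i < n, c (i + 1) ⊆ g '' c i

/-- The transition matrix `A(g,P)` is irreducible. -/
def Irred (g : UI → UI) (P : Set UI) : Prop :=
  ∀ J K, IsPartInt P J → IsPartInt P K → ∃ n > 0, PathFromTo g P n J K

/-- The transition matrix `A(g,P)` is aperiodic: for each vertex the gcd of its return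
times is 1. -/
def Aperiodic (g : UI → UI) (P : Set UI) : Prop :=
  ∀ J, IsPartInt P J → ∀ d : ℕ, (∀ n, 0 < n → PathFromTo g P n J J → d ∣ n) → d = 1

/-!
A `Q`-interval `I`, i.e. a component of the complement of `Q = P ∪ Crit g`, contains no critical
point, so `g` has no extremum on `closure I` inside `I`: both extrema are attained at endpoints of
`I`, which lie in `Q` and are therefore sent into `P`. Hence `g '' I` is, up to points of `P`, an
interval with endpoints in `P`, and so it contains every `P`-interval it meets. Since each
`P`-interval contains only finitely many critical points, every edge `X → Y` of `Γ(g,P)` lifts to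
an edge `I → Y` with `I ⊆ X` a `Q`-interval, and paths of `Γ(g,P)` lift to paths of `Γ(g,Q)` one
step longer. Irreducibility and aperiodicity then transfer from `A(g,P)` to `A(g,Q)`.
-/

instance OrderTopology.locallyConnectedSpace {α : Type*} [TopologicalSpace α]
    [ConditionallyCompleteLinearOrder α] [OrderTopology α] [DenselyOrdered α] :
    LocallyConnectedSpace α := by
  rw [locallyConnectedSpace_iff_connected_subsets]
  intro x U hU
  obtain ⟨b, c, -, hbc, hsub⟩ := exists_Icc_mem_subset_of_mem_nhds hU
  exact ⟨Icc b c, hbc, isPreconnected_Icc, hsub⟩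

theorem mem_connectedComponentIn_of_mem_closure {α : Type*} [TopologicalSpace α] {F : Set α}
    {x t : α} (hx : x ∈ F) (ht : t ∈ closure (connectedComponentIn F x)) (htF : t ∈ F) :
    t ∈ connectedComponentIn F x := by
  have hpre : IsPreconnected (insert t (connectedComponentIn F x)) :=
    isPreconnected_connectedComponentIn.subset_closure (subset_insert _ _)
      (insert_subset ht subset_closure)
  exact hpre.subset_connectedComponentIn (mem_insert_of_mem _ (mem_connectedComponentIn hx))
    (insert_subset htF (connectedComponentIn_subset _ _)) (mem_insert _ _)

theorem Set.OrdConnected.subset_Icc_of_mem {α : Type*} [LinearOrder α] {s : Set α}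
    (hs : s.OrdConnected) {a b y : α} (ha : a ∉ s) (hb : b ∉ s) (hy : y ∈ s)
    (hyab : y ∈ Icc a b) : s ⊆ Icc a b := by
  intro z hz
  refine ⟨not_lt.1 fun hza => ha ?_, not_lt.1 fun hbz => hb ?_⟩
  · exact hs.out hz hy ⟨hza.le, hyab.1⟩
  · exact hs.out hy hz ⟨hyab.2, hbz.le⟩

theorem isClosed_Crit (g : UI → UI) : IsClosed (Crit g) := by
  refine (Set.toFinite {0, 1}).isClosed.union (isOpen_compl_iff.1 ?_)
  refine isOpen_iff_mem_nhds.2 fun x hx => ?_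
  obtain ⟨U, hU, hnot⟩ := not_forall₂.1 hx
  filter_upwards [eventually_mem_nhds_iff.2 hU] with y hy
  exact fun h => hnot (h U hy)

theorem mem_Crit_of_isLocalExtr {g : UI → UI} {t : UI} (h : IsLocalExtr g t) : t ∈ Crit g := by
  by_cases hend : t = 0 ∨ t = 1
  · exact Or.inl hend
  obtain ⟨h0, h1⟩ := not_or.1 hend
  have left : ∀ s ∈ nhds t, ∃ l < t, l ∈ s := by
    intro s hs
    have := nhdsLT_neBot_of_exists_lt ⟨0, lt_of_le_of_ne unitInterval.nonneg' (Ne.symm h0)⟩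
    obtain ⟨l, hls, hlt⟩ := Filter.nonempty_of_mem
      (Filter.inter_mem (nhdsWithin_le_nhds hs) (self_mem_nhdsWithin (s := Iio t)))
    exact ⟨l, hlt, hls⟩
  have right : ∀ s ∈ nhds t, ∃ r > t, r ∈ s := by
    intro s hs
    have := nhdsGT_neBot_of_exists_gt ⟨1, lt_of_le_of_ne unitInterval.le_one' h1⟩
    obtain ⟨r, hrs, hrt⟩ := Filter.nonempty_of_mem
      (Filter.inter_mem (nhdsWithin_le_nhds hs) (self_mem_nhdsWithin (s := Ioi t)))
    exact ⟨r, hrt, hrs⟩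
  refine Or.inr fun U hU => ?_
  have htU : t ∈ U := mem_of_mem_nhds hU
  rcases h with hmin | hmax
  · obtain ⟨l, hlt, hlU, hl⟩ := left _ (Filter.inter_mem hU hmin)
    obtain ⟨r, hrt, hrU, hr⟩ := right _ (Filter.inter_mem hU hmin)
    exact ⟨fun hmono => (hmono hlU htU hlt).not_ge hl, fun hanti => (hanti htU hrU hrt).not_ge hr⟩
  · obtain ⟨l, hlt, hlU, hl⟩ := left _ (Filter.inter_mem hU hmax)
    obtain ⟨r, hrt, hrU, hr⟩ := right _ (Filter.inter_mem hU hmax)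
    exact ⟨fun hmono => (hmono htU hrU hrt).not_ge hr, fun hanti => (hanti hlU htU hlt).not_ge hl⟩

section PartInt

variable {P Q J : Set UI}

theorem IsPartInt.subset_compl (hJ : IsPartInt P J) : J ⊆ Pᶜ := by
  obtain ⟨x, -, rfl⟩ := hJ
  exact connectedComponentIn_subset _ _

theorem IsPartInt.nonempty (hJ : IsPartInt P J) : J.Nonempty := by
  obtain ⟨x, hx, rfl⟩ := hJ
  exact ⟨x, mem_connectedComponentIn hx⟩

theorem IsPartInt.isOpen (hP : IsClosed P) (hJ : IsPartInt P J) : IsOpen J := by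
  obtain ⟨x, -, rfl⟩ := hJ
  exact hP.isOpen_compl.connectedComponentIn

theorem IsPartInt.eq_connectedComponentIn {y : UI} (hJ : IsPartInt P J) (hy : y ∈ J) :
    J = connectedComponentIn Pᶜ y := by
  obtain ⟨x, -, rfl⟩ := hJ
  exact connectedComponentIn_eq hy

theorem IsPartInt.connectedComponentIn_subset (hPQ : P ⊆ Q) (hJ : IsPartInt P J) {t : UI}
    (ht : t ∈ J) : connectedComponentIn Qᶜ t ⊆ J := by
  rw [hJ.eq_connectedComponentIn ht]
  exact connectedComponentIn_mono _ (compl_subset_compl.2 hPQ)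

theorem IsPartInt.exists_superset (hPQ : P ⊆ Q) (hJ : IsPartInt Q J) :
    ∃ J', IsPartInt P J' ∧ J ⊆ J' := by
  obtain ⟨x, hx, rfl⟩ := hJ
  exact ⟨connectedComponentIn Pᶜ x, ⟨x, compl_subset_compl.2 hPQ hx, rfl⟩,
    connectedComponentIn_mono _ (compl_subset_compl.2 hPQ)⟩

end PartInt

section Image

variable {g : UI → UI} {P : Set UI}

theorem exists_Icc_of_isPartInt (hg : Continuous g) (hP : SlackPartition g P) {I : Set UI}
    (hI : IsPartInt (P ∪ Crit g) I) :
    ∃ m ∈ P, ∃ M ∈ P, m < M ∧ g '' I ⊆ Icc m M ∧ Icc m M \ P ⊆ g '' I := by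
  obtain ⟨-, hPcl, hmaps, hcrit⟩ := hP
  obtain ⟨x, hx, rfl⟩ := hI
  set I := connectedComponentIn (P ∪ Crit g)ᶜ x
  have hIo : IsOpen I := (hPcl.union (isClosed_Crit g)).isOpen_compl.connectedComponentIn
  have hxI : x ∈ I := mem_connectedComponentIn hx
  have hend : ∀ t ∈ closure I, t ∉ I → g t ∈ P := fun t ht htI => by
    by_contra hgt
    have htQ : t ∈ (P ∪ Crit g)ᶜ := fun h => hgt (h.elim (hmaps ·) (hcrit ⟨t, ·, rfl⟩))
    exact htI (mem_connectedComponentIn_of_mem_closure hx ht htQ)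
  have hnoext : ∀ t ∈ I, ¬ IsExtrOn g (closure I) t := fun t ht hext =>
    connectedComponentIn_subset _ _ ht <| Or.inr <| mem_Crit_of_isLocalExtr <|
      hext.isLocalExtr (Filter.mem_of_superset (hIo.mem_nhds ht) subset_closure)
  have hext_mem : ∀ t ∈ closure I, IsExtrOn g (closure I) t → g t ∈ P := fun t ht hext =>
    hend t ht fun htI => hnoext t htI hext
  have hK : IsCompact (closure I) := isClosed_closure.isCompact
  have hKne : (closure I).Nonempty := ⟨x, subset_closure hxI⟩
  obtain ⟨a, haK, hmin⟩ := hK.exists_isMinOn hKne hg.continuousOn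
  obtain ⟨b, hbK, hmax⟩ := hK.exists_isMaxOn hKne hg.continuousOn
  refine ⟨g a, hext_mem a haK (Or.inl hmin), g b, hext_mem b hbK (Or.inr hmax), ?_, ?_, ?_⟩
  · by_contra hba
    exact hnoext x hxI <| Or.inl fun z hz =>
      (hmax (subset_closure hxI)).trans ((not_lt.1 hba).trans (hmin hz))
  · rintro _ ⟨t, ht, rfl⟩
    exact ⟨hmin (subset_closure ht), hmax (subset_closure ht)⟩
  · rintro y ⟨hy, hyP⟩
    obtain ⟨t, htK, rfl⟩ := (isPreconnected_connectedComponentIn.closure.image g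
      hg.continuousOn).ordConnected.out ⟨a, haK, rfl⟩ ⟨b, hbK, rfl⟩ hy
    by_cases htI : t ∈ I
    · exact ⟨t, htI, rfl⟩
    · exact absurd (hend t htK htI) hyP

theorem IsPartInt.subset_image_of_mem (hg : Continuous g) (hP : SlackPartition g P)
    {I Y : Set UI} (hI : IsPartInt (P ∪ Crit g) I) (hY : IsPartInt P Y) {y : UI} (hyY : y ∈ Y)
    (hyI : y ∈ g '' I) : Y ⊆ g '' I := by
  obtain ⟨m, hm, M, hM, -, himage, hIcc⟩ := exists_Icc_of_isPartInt hg hP hI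
  have hYP : Y ⊆ Pᶜ := hY.subset_compl
  have hYIcc : Y ⊆ Icc m M := by
    have hyP := hYP hyY
    rw [hY.eq_connectedComponentIn hyY] at hYP ⊢
    exact isPreconnected_connectedComponentIn.ordConnected.subset_Icc_of_mem
      (fun h => hYP h hm) (fun h => hYP h hM) (mem_connectedComponentIn hyP) (himage hyI)
  exact fun z hz => hIcc ⟨hYIcc hz, hYP hz⟩

theorem IsPartInt.exists_isPartInt_subset_image (hg : Continuous g) (hP : SlackPartition g P)
    {I : Set UI} (hI : IsPartInt (P ∪ Crit g) I) : ∃ Y, IsPartInt P Y ∧ Y ⊆ g '' I := by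
  obtain ⟨m, -, M, -, hmM, -, hIcc⟩ := exists_Icc_of_isPartInt hg hP hI
  have hIccP : ¬ Icc m M ⊆ P := fun h =>
    hmM.ne ((hP.1.mono h).isTotallyDisconnected _ subset_rfl isPreconnected_Icc
      (left_mem_Icc.2 hmM.le) (right_mem_Icc.2 hmM.le))
  obtain ⟨y, hy, hyP⟩ := not_subset.1 hIccP
  have hY : IsPartInt P (connectedComponentIn Pᶜ y) := ⟨y, hyP, rfl⟩
  exact ⟨_, hY, hI.subset_image_of_mem hg hP hY (mem_connectedComponentIn hyP) (hIcc ⟨hy, hyP⟩)⟩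

theorem IsPartInt.exists_subset_of_subset_image (hg : Continuous g) (hP : SlackPartition g P)
    (hfin : ∀ J, IsPartInt P J → (Crit g ∩ J).Finite) {X Y : Set UI} (hX : IsPartInt P X)
    (hY : IsPartInt P Y) (hYX : Y ⊆ g '' X) :
    ∃ I, IsPartInt (P ∪ Crit g) I ∧ I ⊆ X ∧ Y ⊆ g '' I := by
  obtain ⟨y₀, hy₀⟩ := hY.nonempty
  have hYinf : Y.Infinite := infinite_of_mem_nhds y₀ ((hY.isOpen hP.2.1).mem_nhds hy₀)
  obtain ⟨y, hyY, hy⟩ := (hYinf.sdiff ((hfin X hX).image g)).nonempty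
  obtain ⟨t, htX, rfl⟩ := hYX hyY
  have htQ : t ∈ (P ∪ Crit g)ᶜ := by
    rintro (htP | htC)
    exacts [hX.subset_compl htX htP, hy ⟨t, ⟨htC, htX⟩, rfl⟩]
  have hI : IsPartInt (P ∪ Crit g) (connectedComponentIn (P ∪ Crit g)ᶜ t) := ⟨t, htQ, rfl⟩
  exact ⟨_, hI, hX.connectedComponentIn_subset subset_union_left htX,
    hI.subset_image_of_mem hg hP hY hyY ⟨t, mem_connectedComponentIn htQ, rfl⟩⟩

end Image

section Path

variable {g : UI → UI} {P : Set UI}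

theorem pathFromTo_zero_iff {J K : Set UI} : PathFromTo g P 0 J K ↔ IsPartInt P J ∧ J = K := by
  constructor
  · rintro ⟨c, rfl, rfl, hpart, -⟩
    exact ⟨hpart 0 le_rfl, rfl⟩
  · rintro ⟨hJ, rfl⟩
    exact ⟨fun _ => J, rfl, rfl, fun _ _ => hJ, fun i hi => absurd hi (Nat.not_lt_zero i)⟩

theorem pathFromTo_succ_iff {n : ℕ} {J K : Set UI} :
    PathFromTo g P (n + 1) J K ↔ IsPartInt P J ∧ ∃ Y, Y ⊆ g '' J ∧ PathFromTo g P n Y K := by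
  constructor
  · rintro ⟨c, rfl, rfl, hpart, hedge⟩
    exact ⟨hpart 0 (Nat.zero_le _), c 1, hedge 0 n.succ_pos, fun i => c (i + 1), rfl, rfl,
      fun i hi => hpart (i + 1) (by omega), fun i hi => hedge (i + 1) (by omega)⟩
  · rintro ⟨hJ, Y, hYJ, c, rfl, rfl, hpart, hedge⟩
    refine ⟨fun | 0 => J | i + 1 => c i, rfl, rfl, ?_, ?_⟩
    · rintro (_ | i) hi
      exacts [hJ, hpart i (by omega)]
    · rintro (_ | i) hi
      exacts [hYJ, hedge i (by omega)]

theorem PathFromTo.trans {m n : ℕ} {X Y Z : Set UI} (h₁ : PathFromTo g P m X Y)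
    (h₂ : PathFromTo g P n Y Z) : PathFromTo g P (m + n) X Z := by
  induction m generalizing X with
  | zero =>
    obtain ⟨-, rfl⟩ := pathFromTo_zero_iff.1 h₁
    simpa using h₂
  | succ m ih =>
    obtain ⟨hX, W, hWX, hW⟩ := pathFromTo_succ_iff.1 h₁
    rw [Nat.add_right_comm]
    exact pathFromTo_succ_iff.2 ⟨hX, W, hWX, ih hW⟩

theorem PathFromTo.isPartInt_left {n : ℕ} {J K : Set UI} (h : PathFromTo g P n J K) :
    IsPartInt P J := by
  obtain ⟨c, rfl, -, hpart, -⟩ := h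
  exact hpart 0 (Nat.zero_le n)

theorem PathFromTo.lift (hg : Continuous g) (hP : SlackPartition g P)
    (hfin : ∀ J, IsPartInt P J → (Crit g ∩ J).Finite) {n : ℕ} {Y Z J K : Set UI}
    (h : PathFromTo g P n Y Z) (hJ : IsPartInt (P ∪ Crit g) J) (hYJ : Y ⊆ g '' J)
    (hK : IsPartInt (P ∪ Crit g) K) (hKZ : K ⊆ Z) : PathFromTo g (P ∪ Crit g) (n + 1) J K := by
  induction n generalizing Y J with
  | zero =>
    obtain ⟨-, rfl⟩ := pathFromTo_zero_iff.1 h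
    exact pathFromTo_succ_iff.2 ⟨hJ, K, hKZ.trans hYJ, pathFromTo_zero_iff.2 ⟨hK, rfl⟩⟩
  | succ n ih =>
    obtain ⟨hY, W, hWY, hW⟩ := pathFromTo_succ_iff.1 h
    obtain ⟨I, hI, hIY, hWI⟩ := hY.exists_subset_of_subset_image hg hP hfin hW.isPartInt_left hWY
    exact pathFromTo_succ_iff.2 ⟨hJ, I, hIY.trans hYJ, ih hW hI hWI⟩

end Path

/-- Let `g` have a slack Markov partition `P` with finitely many critical
points in each partition interval, and let `Q = P ∪ Crit(g)`. If `A(g,P)` is irreducible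
and aperiodic, then so is `A(g,Q)`. -/
theorem stmt_17 (g : UI → UI) (hg : Continuous g) (P : Set UI)
    (hP : SlackPartition g P)
    (hfin : ∀ J, IsPartInt P J → (Crit g ∩ J).Finite)
    (hirr : Irred g P) (haper : Aperiodic g P) :
    Irred g (P ∪ Crit g) ∧ Aperiodic g (P ∪ Crit g) := by
  constructor
  · intro J K hJ hK
    obtain ⟨Y, hY, hYJ⟩ := hJ.exists_isPartInt_subset_image hg hP
    obtain ⟨K', hK', hKK'⟩ := hK.exists_superset subset_union_left
    obtain ⟨n, -, hn⟩ := hirr Y K' hY hK'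
    exact ⟨n + 1, n.succ_pos, hn.lift hg hP hfin hJ hYJ hK hKK'⟩
  · intro J hJ d hd
    obtain ⟨Y, hY, hYJ⟩ := hJ.exists_isPartInt_subset_image hg hP
    obtain ⟨J', hJ', hJJ'⟩ := hJ.exists_superset subset_union_left
    have hloop : ∀ n, PathFromTo g P n Y J' → d ∣ n + 1 := fun n hn =>
      hd (n + 1) n.succ_pos (hn.lift hg hP hfin hJ hYJ hJ hJJ')
    obtain ⟨n₀, -, hn₀⟩ := hirr Y J' hY hJ'
    -- a `P`-loop at `J'` of length `r` gives `Q`-loops at `J` of lengths `n₀ + 1` and `n₀ + r + 1`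
    refine haper J' hJ' d fun r _ hr => ?_
    have := Nat.dvd_sub (hloop (n₀ + r) (hn₀.trans hr)) (hloop n₀ hn₀)
    rwa [show n₀ + r + 1 - (n₀ + 1) = r by omega] at this
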